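/- Let X = {0,1}^ℕ with the shift T, and let (a_1, a_2, …) be a sequence of non-negative numbers, with a_0 := 1. The set R(a; {[0^n]}_{n≥1}) of points x ∈ X whose frequency of hitting the cylinder [0^k] equals a_k for every k ≥ 1 is nonempty if and only if 1 = a_0 ≥ a_1 ≥ a_2 ≥ … and a_i − 2a_{i+1} + a_{i+2} ≥ 0 for all i ≥ 0. -/

import Mathlib

open MeasureTheory Filter Topology Set
open scoped ENNReal

/-! Symbolic dynamics on `X = {0,1}^ℕ`. -/

/-- The metric `d(x,y) = (1/2)^(first difference)` on the symbolic space `{0,1}^ℕ`. -/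
noncomputable instance : MetricSpace (ℕ → Bool) := PiNat.metricSpace

/-- The shift map on `{0,1}^ℕ`. -/
def shift : (ℕ → Bool) → ℕ → Bool := fun x n => x (n + 1)

/-- The cylinder `[w]` of all sequences beginning with the finite word `w`. -/
def cyl (w : List Bool) : Set (ℕ → Bool) :=
  {x | ∀ i : Fin w.length, x i.1 = w.get i}

/-- `R(x,[w]) = r` : the frequency of visits of the orbit of `x` to the cylinder `[w]`
exists and equals `r`. -/
def hasFreq (w : List Bool) (x : ℕ → Bool) (r : ℝ) : Prop :=
  Filter.Tendsto (fun n : ℕ =>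
      (∑ j ∈ Finset.range n, (cyl w).indicator (fun _ => (1 : ℝ)) (shift^[j] x)) / (n : ℝ))
    Filter.atTop (nhds r)

/-! Let `S k n` count the `j < n` at which `x` has a run `0^k`. For necessity, `S (k+1) ≤ S k`, and
`S k - S (k+1)` counts the occurrences of `0^k 1`; an occurrence of `0^(k+1) 1` at `j` gives one of
`0^k 1` at `j + 1`, whence `2 S (k+1) ≤ S k + S (k+2) + 1`. Dividing by `n` gives monotonicity
and convexity of the limits.

For sufficiency let `hⱼ = aⱼ - 2aⱼ₊₁ + aⱼ₊₂ ≥ 0` and `L = lim aₙ`. Since `n (aₙ - aₙ₊₁) → 0`,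
`∑ⱼ hⱼ (j + 1 - k)₊ = a_k - L`, so a word made of about `D hⱼ` blocks `0^j 1` for each `j` and one
block `0^(D L) 1` has `0^k`-frequency close to `a_k` when `D` is large. Concatenating such words,
each placed late enough that its length is negligible compared to everything before it, gives a
point with frequencies `a_k`, by a weighted Cesàro argument. -/

open Finset in
theorem tendsto_sum_div_sum_of_tendsto_div {κ ℓ : ℕ → ℝ} {α : ℝ} (hℓ : ∀ i, 0 < ℓ i)
    (hsum : Tendsto (fun n => ∑ i ∈ range n, ℓ i) atTop atTop)
    (h : Tendsto (fun i => κ i / ℓ i) atTop (𝓝 α)) :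
    Tendsto (fun n => (∑ i ∈ range n, κ i) / ∑ i ∈ range n, ℓ i) atTop (𝓝 α) := by
  have hlo : (fun i => κ i - α * ℓ i) =o[atTop] ℓ := by
    refine (Asymptotics.isLittleO_iff_tendsto fun i hi => absurd hi (hℓ i).ne').2 ?_
    simpa [sub_div, mul_div_cancel_right₀ _ (hℓ _).ne'] using h.sub_const α
  have := ((hlo.sum_range (fun i => (hℓ i).le) hsum).tendsto_div_nhds_zero).add_const α
  rw [zero_add] at this
  refine this.congr' ?_
  filter_upwards [hsum.eventually_gt_atTop 0] with n hn
  rw [sum_sub_distrib, ← mul_sum, sub_div, mul_div_cancel_right₀ _ hn.ne', sub_add_cancel]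

theorem tendsto_div_of_tendsto_div_blocks {S : ℕ → ℝ} {M : ℕ → ℕ} {α : ℝ}
    (hS : ∀ m n, m ≤ n → |S n - S m| ≤ n - m) (hM0 : M 0 = 0) (hM : ∀ i, i ≤ M i)
    (hgap : Tendsto (fun i => ((M (i + 1) : ℝ) - M i) / M i) atTop (𝓝 0))
    (hlim : Tendsto (fun i => S (M i) / M i) atTop (𝓝 α)) :
    Tendsto (fun n => S n / n) atTop (𝓝 α) := by
  classical
  let blk : ℕ → ℕ := fun n => Nat.findGreatest (fun i => M i ≤ n) n
  have hblk_le (n : ℕ) : M (blk n) ≤ n :=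
    Nat.findGreatest_spec (P := fun i => M i ≤ n) (Nat.zero_le n) (hM0.symm ▸ Nat.zero_le n)
  have hlt_blk (n : ℕ) : n < M (blk n + 1) := by
    by_contra! h
    exact Nat.findGreatest_is_greatest (Nat.lt_succ_self _) ((hM _).trans h) h
  have hblk : Tendsto blk atTop atTop :=
    tendsto_atTop_atTop.2 fun I => ⟨M I, fun n hn => Nat.le_findGreatest ((hM I).trans hn) hn⟩
  let g : ℕ → ℝ := fun i => |S (M i) / M i - α| + (1 + |α|) * (((M (i + 1) : ℝ) - M i) / M i)
  have hg : Tendsto g atTop (𝓝 0) := by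
    simpa using ((hlim.sub_const α).abs).add (hgap.const_mul (1 + |α|))
  have hbound : ∀ᶠ n in atTop, |S n / n - α| ≤ g (blk n) := by
    filter_upwards [hblk.eventually_ge_atTop 1] with n hn
    set i := blk n
    have hm : (0 : ℝ) < M i := by exact_mod_cast (hM i).trans_lt' hn
    have hmn : (M i : ℝ) ≤ n := by exact_mod_cast hblk_le n
    have hn0 : (0 : ℝ) < n := hm.trans_le hmn
    have hnM : (n : ℝ) - M i ≤ M (i + 1) - M i := by
      gcongr; exact_mod_cast (hlt_blk n).le
    have hstep : |S n - α * n| ≤ |S (M i) - α * M i| + (1 + |α|) * ((M (i + 1) : ℝ) - M i) := by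
      have hα : |α * ((n : ℝ) - M i)| ≤ |α| * ((M (i + 1) : ℝ) - M i) := by
        rw [abs_mul, abs_of_nonneg (sub_nonneg.2 hmn)]
        exact mul_le_mul_of_nonneg_left hnM (abs_nonneg α)
      calc |S n - α * n| = |(S (M i) - α * M i) + (S n - S (M i)) - α * (n - M i)| := by ring_nf
        _ ≤ |S (M i) - α * M i| + |S n - S (M i)| + |α * (n - M i)| :=
          (abs_sub _ _).trans (add_le_add_left (abs_add_le _ _) _)
        _ ≤ _ := by linarith [hS _ n (hblk_le n)]
    calc |S n / n - α| = |S n - α * n| / n := by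
          rw [← abs_of_pos hn0, ← abs_div, abs_of_pos hn0, sub_div, mul_div_cancel_right₀ _ hn0.ne']
      _ ≤ (|S (M i) - α * M i| + (1 + |α|) * ((M (i + 1) : ℝ) - M i)) / M i := by
          gcongr
          exact add_nonneg (abs_nonneg _) (mul_nonneg (by positivity) (hnM.trans' (sub_nonneg.2 hmn)))
      _ = g i := by
          rw [add_div, mul_div_assoc, ← abs_of_pos hm, ← abs_div, abs_of_pos hm, sub_div,
            mul_div_cancel_right₀ _ hm.ne']
  rw [tendsto_iff_norm_sub_tendsto_zero]
  exact squeeze_zero' (.of_forall fun n => norm_nonneg _) hbound (hg.comp hblk)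

theorem exists_tendsto_atTop_and_tendsto_comp_div (ℓ : ℕ → ℕ) :
    ∃ τ : ℕ → ℕ, Tendsto τ atTop atTop ∧ Tendsto (fun i => (ℓ (τ i) : ℝ) / i) atTop (𝓝 0) := by
  classical
  set τ : ℕ → ℕ := fun i => Nat.findGreatest (fun t => (t + 1) * ℓ t ≤ i) i
  have hτ : Tendsto τ atTop atTop := tendsto_atTop_atTop.2 fun T =>
    ⟨T + (T + 1) * ℓ T, fun i hi => Nat.le_findGreatest (by omega) (by omega)⟩
  refine ⟨τ, hτ, squeeze_zero' (.of_forall fun i => div_nonneg (Nat.cast_nonneg _) i.cast_nonneg) ?_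
    (tendsto_one_div_add_atTop_nhds_zero_nat.comp hτ)⟩
  filter_upwards [eventually_ge_atTop (ℓ 0 + 1)] with i hi
  have hspec : (τ i + 1) * ℓ (τ i) ≤ i :=
    Nat.findGreatest_spec (P := fun t => (t + 1) * ℓ t ≤ i) (Nat.zero_le i) (by omega)
  rw [Function.comp_apply, div_le_div_iff₀ (by exact_mod_cast (by omega : 0 < i)) (by positivity)]
  exact_mod_cast (by linarith : ℓ (τ i) * (τ i + 1) ≤ 1 * i)

section ConvexSequence

variable {a : ℕ → ℝ} {L : ℝ}

/-- The decrements from `n / 2` to `n` are at least `a n - a (n + 1)` and sum to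
`a (n / 2) - a n → 0`. -/
theorem tendsto_mul_sub_succ_of_antitone (ha : Antitone a) (hL : Tendsto a atTop (𝓝 L))
    (hd : Antitone fun n => a n - a (n + 1)) :
    Tendsto (fun n : ℕ => n * (a n - a (n + 1))) atTop (𝓝 0) := by
  have hbound (n : ℕ) : n * (a n - a (n + 1)) ≤ 2 * (a (n / 2) - a n) := by
    have htel : ∑ i ∈ Finset.Ico (n / 2) n, (a i - a (i + 1)) = a (n / 2) - a n := by
      simpa only [neg_sub_neg] using Finset.sum_Ico_sub (fun i => -a i) (Nat.div_le_self n 2)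
    have hsum := Finset.card_nsmul_le_sum (Finset.Ico (n / 2) n) (fun i => a i - a (i + 1)) _
      fun i hi => hd (Finset.mem_Ico.1 hi).2.le
    rw [htel, Nat.card_Ico, nsmul_eq_mul, Nat.cast_sub (Nat.div_le_self n 2)] at hsum
    have hhalf : (n : ℝ) ≤ 2 * (n - (n / 2 : ℕ)) := by
      have := Nat.cast_div_le (α := ℝ) (m := n) (n := 2)
      push_cast at this
      linarith
    nlinarith [sub_nonneg.2 (ha n.le_succ)]
  refine squeeze_zero (fun n => mul_nonneg n.cast_nonneg (sub_nonneg.2 (ha n.le_succ))) hbound ?_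
  simpa using (((hL.comp (Nat.tendsto_div_const_atTop two_ne_zero)).sub hL).const_mul 2)

lemma sum_secondDiff_mul_eq (a : ℕ → ℝ) (k m : ℕ) :
    ∑ j ∈ Finset.range (k + m), (a j - 2 * a (j + 1) + a (j + 2)) * ((j + 1 - k : ℕ) : ℝ) =
      a k - a (k + m) - m * (a (k + m) - a (k + m + 1)) := by
  induction m with
  | zero =>
    simpa using Finset.sum_eq_zero fun j hj => by
      rw [Nat.sub_eq_zero_of_le (Finset.mem_range.1 hj), Nat.cast_zero, mul_zero]
  | succ m ih =>
    rw [← Nat.add_assoc, Finset.sum_range_succ, ih, show k + m + 1 - k = m + 1 by omega]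
    push_cast
    ring

theorem tendsto_sum_secondDiff_mul (ha : Antitone a) (hL : Tendsto a atTop (𝓝 L))
    (hconv : ∀ i, 0 ≤ a i - 2 * a (i + 1) + a (i + 2)) (k : ℕ) :
    Tendsto (fun n => ∑ j ∈ Finset.range n,
      (a j - 2 * a (j + 1) + a (j + 2)) * ((j + 1 - k : ℕ) : ℝ)) atTop (𝓝 (a k - L)) := by
  have hd : Antitone fun n => a n - a (n + 1) :=
    antitone_nat_of_succ_le fun n => by linarith [hconv n]
  have hshift : Tendsto (fun m => k + m) atTop atTop :=
    tendsto_atTop_atTop.2 fun b => ⟨b, fun m hm => by omega⟩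
  have hmul : Tendsto (fun m : ℕ => m * (a (k + m) - a (k + m + 1))) atTop (𝓝 0) := by
    refine squeeze_zero (fun m => mul_nonneg m.cast_nonneg (sub_nonneg.2 (ha (k + m).le_succ)))
      (fun m => ?_) ((tendsto_mul_sub_succ_of_antitone ha hL hd).comp hshift)
    exact mul_le_mul_of_nonneg_right (by simp) (sub_nonneg.2 (ha (k + m).le_succ))
  rw [← tendsto_add_atTop_iff_nat k]
  simp only [Nat.add_comm _ k, sum_secondDiff_mul_eq]
  simpa using ((tendsto_const_nhds (x := a k)).sub (hL.comp hshift)).sub hmul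

end ConvexSequence

def ZeroRunAt (x : ℕ → Bool) (k j : ℕ) : Prop := ∀ i < k, x (j + i) = false

instance (x : ℕ → Bool) (k : ℕ) : DecidablePred (ZeroRunAt x k) :=
  fun j => inferInstanceAs (Decidable (∀ i < k, x (j + i) = false))

def zeroRunCount (x : ℕ → Bool) (k n : ℕ) : ℕ := Nat.count (ZeroRunAt x k) n

lemma shift_iterate_apply (x : ℕ → Bool) (j i : ℕ) : shift^[j] x i = x (j + i) := by
  induction j generalizing x with
  | zero => simp
  | succ j ih => rw [Function.iterate_succ_apply, ih]; simp only [shift]; congr 1; omega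

lemma shift_iterate_mem_cyl_replicate_iff (x : ℕ → Bool) (k j : ℕ) :
    shift^[j] x ∈ cyl (List.replicate k false) ↔ ZeroRunAt x k j := by
  simp [cyl, ZeroRunAt, shift_iterate_apply, Fin.forall_iff]

lemma hasFreq_replicate_false_iff (x : ℕ → Bool) (k : ℕ) (r : ℝ) :
    hasFreq (List.replicate k false) x r ↔
      Tendsto (fun n => (zeroRunCount x k n : ℝ) / n) atTop (𝓝 r) := by
  refine tendsto_congr fun n => ?_
  rw [zeroRunCount, Nat.count_eq_card_filter_range, Finset.card_filter, Nat.cast_sum]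
  congr 1
  refine Finset.sum_congr rfl fun j _ => ?_
  classical
  simp only [Set.indicator_apply, shift_iterate_mem_cyl_replicate_iff, Nat.cast_ite, Nat.cast_one,
    Nat.cast_zero]

lemma zeroRunCount_zero (x : ℕ → Bool) (n : ℕ) : zeroRunCount x 0 n = n := by
  rw [zeroRunCount, Nat.count_eq_card_filter_range,
    Finset.filter_true_of_mem fun j _ i hi => absurd hi (Nat.not_lt_zero i), Finset.card_range]

lemma tendsto_zeroRunCount_zero (x : ℕ → Bool) :
    Tendsto (fun n => (zeroRunCount x 0 n : ℝ) / n) atTop (𝓝 1) := by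
  refine tendsto_const_nhds.congr' ?_
  filter_upwards [eventually_ne_atTop 0] with n hn
  rw [zeroRunCount_zero, div_self (by exact_mod_cast hn)]

lemma abs_zeroRunCount_sub_le (x : ℕ → Bool) (k : ℕ) {m n : ℕ} (hmn : m ≤ n) :
    |(zeroRunCount x k n : ℝ) - zeroRunCount x k m| ≤ n - m := by
  obtain ⟨b, rfl⟩ := Nat.exists_eq_add_of_le hmn
  have := Nat.count_le (p := fun j => ZeroRunAt x k (m + j)) (n := b)
  rw [zeroRunCount, zeroRunCount, Nat.count_add, abs_of_nonneg (by push_cast; linarith)]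
  push_cast
  linarith [(by exact_mod_cast this : (Nat.count (fun j => ZeroRunAt x k (m + j)) b : ℝ) ≤ b)]

def ZeroBlockAt (x : ℕ → Bool) (k j : ℕ) : Prop := ZeroRunAt x k j ∧ x (j + k) = true

instance (x : ℕ → Bool) (k : ℕ) : DecidablePred (ZeroBlockAt x k) :=
  fun j => inferInstanceAs (Decidable (ZeroRunAt x k j ∧ x (j + k) = true))

lemma zeroRunAt_succ_iff (x : ℕ → Bool) (k j : ℕ) :
    ZeroRunAt x (k + 1) j ↔ ZeroRunAt x k j ∧ x (j + k) = false := by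
  simp only [ZeroRunAt, Nat.forall_lt_succ_right]

lemma zeroRunCount_eq_succ_add (x : ℕ → Bool) (k n : ℕ) :
    zeroRunCount x k n = zeroRunCount x (k + 1) n + Nat.count (ZeroBlockAt x k) n := by
  induction n with
  | zero => simp [zeroRunCount]
  | succ n ih =>
    have := zeroRunAt_succ_iff x k n
    simp only [zeroRunCount, ZeroBlockAt, Nat.count_succ] at ih ⊢
    split_ifs <;> simp_all <;> omega

lemma zeroRunCount_succ_le (x : ℕ → Bool) (k n : ℕ) :
    zeroRunCount x (k + 1) n ≤ zeroRunCount x k n := by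
  rw [zeroRunCount_eq_succ_add x k n]
  exact Nat.le_add_right _ _

lemma count_zeroBlockAt_succ_le (x : ℕ → Bool) (k n : ℕ) :
    Nat.count (ZeroBlockAt x (k + 1)) n ≤ Nat.count (ZeroBlockAt x k) n + 1 :=
  calc Nat.count (ZeroBlockAt x (k + 1)) n
      ≤ Nat.count (fun j => ZeroBlockAt x k (j + 1)) n :=
        Nat.count_mono_left fun j _ ⟨hrun, hend⟩ =>
          ⟨fun i hi => by simpa [Nat.add_right_comm, Nat.add_assoc] using hrun (i + 1) (by omega),
            by simpa [Nat.add_right_comm, Nat.add_assoc] using hend⟩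
    _ ≤ Nat.count (ZeroBlockAt x k) (n + 1) := by rw [Nat.count_succ']; exact Nat.le_add_right _ _
    _ ≤ Nat.count (ZeroBlockAt x k) n + 1 := by rw [Nat.count_succ]; split_ifs <;> omega

lemma two_mul_zeroRunCount_succ_le (x : ℕ → Bool) (k n : ℕ) :
    2 * zeroRunCount x (k + 1) n ≤ zeroRunCount x k n + zeroRunCount x (k + 2) n + 1 := by
  have := zeroRunCount_eq_succ_add x k n
  have : zeroRunCount x (k + 1) n = zeroRunCount x (k + 2) n + _ :=
    zeroRunCount_eq_succ_add x (k + 1) n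
  have := count_zeroBlockAt_succ_le x k n
  omega

section Necessity

variable {x : ℕ → Bool} {a : ℕ → ℝ}
  (hx : ∀ k, Tendsto (fun n => (zeroRunCount x k n : ℝ) / n) atTop (𝓝 (a k)))
include hx

lemma succ_le_of_tendsto_zeroRunCount (i : ℕ) : a (i + 1) ≤ a i :=
  le_of_tendsto_of_tendsto' (hx (i + 1)) (hx i) fun n => by
    gcongr
    exact zeroRunCount_succ_le x i n

lemma two_mul_succ_le_of_tendsto_zeroRunCount (i : ℕ) : 2 * a (i + 1) ≤ a i + a (i + 2) := by
  have hsum : Tendsto (fun n => (zeroRunCount x i n : ℝ) / n + zeroRunCount x (i + 2) n / n +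
      1 / n) atTop (𝓝 (a i + a (i + 2) + 0)) :=
    ((hx i).add (hx (i + 2))).add tendsto_one_div_atTop_nhds_zero_nat
  rw [add_zero] at hsum
  refine le_of_tendsto_of_tendsto' ((hx (i + 1)).const_mul 2) hsum fun n => ?_
  rw [← mul_div_assoc, ← add_div, ← add_div]
  gcongr
  exact_mod_cast two_mul_zeroRunCount_succ_le x i n

end Necessity

def zeroBlock (j : ℕ) : List Bool := List.replicate j false ++ [true]

def runWord (r : List ℕ) : List Bool := r.flatMap zeroBlock

/-- The number of occurrences of `0^k` in `runWord r` (`zeroRunCount_runWord`). -/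
def runWordCount (k : ℕ) (r : List ℕ) : ℕ := (r.map (· + 1 - k)).sum

lemma runWordCount_append (k : ℕ) (r s : List ℕ) :
    runWordCount k (r ++ s) = runWordCount k r + runWordCount k s := by
  simp [runWordCount]

lemma length_runWord (r : List ℕ) : (runWord r).length = runWordCount 0 r := by
  simp [runWord, runWordCount, zeroBlock, List.length_flatMap]

lemma zeroRunCount_zeroBlock {x : ℕ → Bool} {j : ℕ} (hzero : ∀ i < j, x i = false)
    (hone : x j = true) (k : ℕ) : zeroRunCount x k (j + 1) = j + 1 - k := by
  suffices (Finset.range (j + 1)).filter (ZeroRunAt x k) = Finset.range (j + 1 - k) by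
    rw [zeroRunCount, Nat.count_eq_card_filter_range, this, Finset.card_range]
  ext p
  simp only [Finset.mem_filter, Finset.mem_range, ZeroRunAt]
  constructor
  · rintro ⟨hp, hrun⟩
    by_contra hpk
    have := hrun (j - p) (by omega)
    rw [Nat.add_sub_cancel' (by omega), hone] at this
    exact Bool.noConfusion this
  · exact fun hp => ⟨by omega, fun i hi => hzero _ (by omega)⟩

/-- Every block ends in `1`, so no run of zeros straddles two blocks. -/
lemma zeroRunCount_runWord {x : ℕ → Bool} {r : List ℕ}
    (hx : ∀ i < (runWord r).length, x i = (runWord r).getD i true) (k : ℕ) :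
    zeroRunCount x k (runWord r).length = runWordCount k r := by
  induction r generalizing x with
  | nil => rfl
  | cons j r ih =>
    have hword : runWord (j :: r) = zeroBlock j ++ runWord r := rfl
    have hlen : (zeroBlock j).length = j + 1 := by simp [zeroBlock]
    rw [hword, List.length_append, hlen] at hx ⊢
    have hblock : ∀ i < j + 1, x i = (zeroBlock j).getD i true := fun i hi => by
      rw [hx i (by omega), List.getD_append _ _ _ _ (by omega)]
    have htail : zeroRunCount (fun i => x (j + 1 + i)) k (runWord r).length = runWordCount k r :=
      ih fun i hi => by
        rw [hx _ (by omega), List.getD_append_right _ _ _ _ (by omega), hlen,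
          Nat.add_sub_cancel_left]
    have hzero : ∀ i < j, x i = false := fun i hi => by
      simpa [zeroBlock, List.getElem?_append, hi] using hblock i (by omega)
    have hone : x j = true := by simpa [zeroBlock] using hblock j (by omega)
    rw [zeroRunCount, Nat.count_add, ← zeroRunCount, zeroRunCount_zeroBlock hzero hone k,
      runWordCount, List.map_cons, List.sum_cons, ← runWordCount, ← htail, zeroRunCount]
    simp only [ZeroRunAt, Nat.add_assoc]
    rfl

def runPrefix (V : ℕ → List ℕ) : ℕ → List ℕ
  | 0 => []
  | i + 1 => runPrefix V i ++ V i

def concatRuns (V : ℕ → List ℕ) (n : ℕ) : Bool := (runWord (runPrefix V (n + 1))).getD n true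

section Concatenation

variable {V : ℕ → List ℕ}

lemma runWordCount_runPrefix (k i : ℕ) :
    runWordCount k (runPrefix V i) = ∑ j ∈ Finset.range i, runWordCount k (V j) := by
  induction i with
  | zero => rfl
  | succ i ih => rw [runPrefix, runWordCount_append, ih, Finset.sum_range_succ]

lemma runPrefix_prefix {i j : ℕ} (h : i ≤ j) : runPrefix V i <+: runPrefix V j := by
  induction j, h using Nat.le_induction with
  | base => exact List.prefix_refl _
  | succ j _ ih => exact ih.trans (List.prefix_append _ _)

lemma one_le_runWordCount_zero {r : List ℕ} (hr : r ≠ []) : 1 ≤ runWordCount 0 r := by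
  obtain ⟨j, r, rfl⟩ := List.exists_cons_of_ne_nil hr
  simp only [runWordCount, List.map_cons, List.sum_cons]
  omega

variable (hV : ∀ i, V i ≠ [])
include hV

lemma le_runWordCount_zero_runPrefix (i : ℕ) : i ≤ runWordCount 0 (runPrefix V i) := by
  rw [runWordCount_runPrefix]
  simpa using Finset.card_nsmul_le_sum (Finset.range i) _ 1 fun j _ =>
    one_le_runWordCount_zero (hV j)

lemma concatRuns_eq_getD {i p : ℕ} (hp : p < (runWord (runPrefix V i)).length) :
    concatRuns V p = (runWord (runPrefix V i)).getD p true := by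
  have hp' : p < (runWord (runPrefix V (p + 1))).length := by
    rw [length_runWord]; exact le_runWordCount_zero_runPrefix hV (p + 1)
  obtain ⟨w, hw⟩ := (runPrefix_prefix (V := V) (le_max_left i (p + 1))).flatMap zeroBlock
  obtain ⟨w', hw'⟩ := (runPrefix_prefix (V := V) (le_max_right i (p + 1))).flatMap zeroBlock
  rw [concatRuns, ← List.getD_append _ w' _ _ hp', ← List.getD_append _ w _ _ hp]
  simp only [runWord] at hw hw' ⊢
  rw [hw, hw']

lemma zeroRunCount_concatRuns (k i : ℕ) :
    zeroRunCount (concatRuns V) k (runWordCount 0 (runPrefix V i)) =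
      runWordCount k (runPrefix V i) := by
  rw [← length_runWord]
  exact zeroRunCount_runWord (fun p hp => concatRuns_eq_getD hV hp) k

theorem tendsto_zeroRunCount_concatRuns {k : ℕ} {α : ℝ}
    (hfreq : Tendsto (fun i => (runWordCount k (V i) : ℝ) / runWordCount 0 (V i)) atTop (𝓝 α))
    (hslow : Tendsto (fun i => (runWordCount 0 (V i) : ℝ) / i) atTop (𝓝 0)) :
    Tendsto (fun n => (zeroRunCount (concatRuns V) k n : ℝ) / n) atTop (𝓝 α) := by
  have hℓ (i : ℕ) : (0 : ℝ) < runWordCount 0 (V i) := by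
    exact_mod_cast one_le_runWordCount_zero (hV i)
  refine tendsto_div_of_tendsto_div_blocks (fun m n h => abs_zeroRunCount_sub_le _ k h) rfl
    (le_runWordCount_zero_runPrefix hV) ?_ ?_
  · have hstep (i : ℕ) : (runWordCount 0 (runPrefix V (i + 1)) : ℝ) -
        runWordCount 0 (runPrefix V i) = runWordCount 0 (V i) := by
      rw [runPrefix, runWordCount_append]; push_cast; ring
    simp only [hstep]
    refine squeeze_zero' (.of_forall fun i => div_nonneg (hℓ i).le (Nat.cast_nonneg _)) ?_ hslow
    filter_upwards [eventually_gt_atTop 0] with i hi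
    exact div_le_div_of_nonneg_left (hℓ i).le (by exact_mod_cast hi)
      (by exact_mod_cast le_runWordCount_zero_runPrefix hV i)
  · simp only [zeroRunCount_concatRuns hV]
    simp only [runWordCount_runPrefix, Nat.cast_sum]
    refine tendsto_sum_div_sum_of_tendsto_div hℓ ?_ hfreq
    refine tendsto_atTop_mono (fun n => ?_) tendsto_natCast_atTop_atTop
    exact_mod_cast le_runWordCount_zero_runPrefix hV n |>.trans_eq (runWordCount_runPrefix 0 n)

end Concatenation

theorem exists_tendsto_zeroRunCount {P : ℕ → List ℕ} (hP : ∀ t, P t ≠ []) {α : ℕ → ℝ}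
    (hfreq : ∀ k, Tendsto (fun t => (runWordCount k (P t) : ℝ) / runWordCount 0 (P t)) atTop
      (𝓝 (α k))) :
    ∃ x : ℕ → Bool, ∀ k, Tendsto (fun n => (zeroRunCount x k n : ℝ) / n) atTop (𝓝 (α k)) := by
  obtain ⟨τ, hτ, hslow⟩ := exists_tendsto_atTop_and_tendsto_comp_div fun t => runWordCount 0 (P t)
  exact ⟨concatRuns (P ∘ τ), fun k =>
    tendsto_zeroRunCount_concatRuns (fun i => hP (τ i)) ((hfreq k).comp hτ) hslow⟩

/-- Since `∑ⱼ hⱼ (j + 1 - k)₊ = a k - L` for the second differences `hⱼ` of `a`, the word `0^k`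
occurs about `(t+1)³ a k` times in `runWord (approxRuns a L t)`. -/
noncomputable def approxRuns (a : ℕ → ℝ) (L : ℝ) (t : ℕ) : List ℕ :=
  runPrefix (fun j => List.replicate ⌊((t : ℝ) + 1) ^ 3 * (a j - 2 * a (j + 1) + a (j + 2))⌋₊ j)
    (t + 1) ++ [⌊((t : ℝ) + 1) ^ 3 * L⌋₊]

section ApproxRuns

variable {a : ℕ → ℝ} {L : ℝ}

lemma approxRuns_ne_nil (t : ℕ) : approxRuns a L t ≠ [] := by simp [approxRuns]

lemma runWordCount_approxRuns (k t : ℕ) :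
    runWordCount k (approxRuns a L t) =
      ∑ j ∈ Finset.range (t + 1),
        ⌊((t : ℝ) + 1) ^ 3 * (a j - 2 * a (j + 1) + a (j + 2))⌋₊ * (j + 1 - k) +
      (⌊((t : ℝ) + 1) ^ 3 * L⌋₊ + 1 - k) := by
  rw [approxRuns, runWordCount_append, runWordCount_runPrefix]
  simp [runWordCount]

lemma abs_runWordCount_approxRuns_sub_le (hconv : ∀ i, 0 ≤ a i - 2 * a (i + 1) + a (i + 2))
    (hL : 0 ≤ L) (k t : ℕ) :
    |(runWordCount k (approxRuns a L t) : ℝ) - ((t : ℝ) + 1) ^ 3 *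
        (∑ j ∈ Finset.range (t + 1), (a j - 2 * a (j + 1) + a (j + 2)) * ((j + 1 - k : ℕ) : ℝ) + L)|
      ≤ ((t : ℝ) + 1) ^ 2 + (k + 1) := by
  rw [runWordCount_approxRuns]
  push_cast
  set D : ℝ := ((t : ℝ) + 1) ^ 3
  have hfloor {r : ℝ} (hr : 0 ≤ r) : |(⌊r⌋₊ : ℝ) - r| ≤ 1 := by
    rw [abs_sub_comm, abs_of_nonneg (sub_nonneg.2 (Nat.floor_le hr))]
    linarith [Nat.lt_floor_add_one r]
  have hbody : |∑ j ∈ Finset.range (t + 1), ((⌊D * (a j - 2 * a (j + 1) + a (j + 2))⌋₊ : ℝ) -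
      D * (a j - 2 * a (j + 1) + a (j + 2))) * ((j + 1 - k : ℕ) : ℝ)| ≤ ((t : ℝ) + 1) ^ 2 :=
    calc _ ≤ ∑ j ∈ Finset.range (t + 1), ((t : ℝ) + 1) := by
          refine (Finset.abs_sum_le_sum_abs _ _).trans (Finset.sum_le_sum fun j hj => ?_)
          rw [abs_mul, Nat.abs_cast]
          have hj : ((j + 1 - k : ℕ) : ℝ) ≤ t + 1 := by
            exact_mod_cast (Nat.sub_le _ _).trans (Finset.mem_range.1 hj)
          nlinarith [hfloor (mul_nonneg (by positivity : (0 : ℝ) ≤ D) (hconv j)),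
            abs_nonneg ((⌊D * (a j - 2 * a (j + 1) + a (j + 2))⌋₊ : ℝ) -
              D * (a j - 2 * a (j + 1) + a (j + 2))), Nat.cast_nonneg (α := ℝ) (j + 1 - k)]
      _ = ((t : ℝ) + 1) ^ 2 := by
          rw [Finset.sum_const, Finset.card_range, nsmul_eq_mul]; push_cast; ring
  have htail : |((⌊D * L⌋₊ + 1 - k : ℕ) : ℝ) - D * L| ≤ k + 1 := by
    have h₁ := Nat.floor_le (mul_nonneg (by positivity : (0 : ℝ) ≤ D) hL)
    have h₂ := Nat.lt_floor_add_one (D * L)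
    rcases le_total k (⌊D * L⌋₊ + 1) with hk | hk
    · rw [Nat.cast_sub hk, abs_le]; push_cast; constructor <;> linarith [k.cast_nonneg (α := ℝ)]
    · have hk' : (⌊D * L⌋₊ : ℝ) + 1 ≤ k := by exact_mod_cast hk
      rw [Nat.sub_eq_zero_of_le hk, abs_le]; push_cast; constructor <;> linarith
  calc _ = |∑ j ∈ Finset.range (t + 1), ((⌊D * (a j - 2 * a (j + 1) + a (j + 2))⌋₊ : ℝ) -
        D * (a j - 2 * a (j + 1) + a (j + 2))) * ((j + 1 - k : ℕ) : ℝ) +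
        (((⌊D * L⌋₊ + 1 - k : ℕ) : ℝ) - D * L)| := by
        rw [Finset.sum_congr rfl fun j _ => sub_mul _ _ _, Finset.sum_sub_distrib,
          mul_add D (Finset.sum _ _) L, Finset.mul_sum]
        simp only [mul_assoc]
        ring_nf
    _ ≤ _ := (abs_add_le _ _).trans (add_le_add hbody htail)

variable (ha : Antitone a) (hL : Tendsto a atTop (𝓝 L)) (hL0 : 0 ≤ L)
  (hconv : ∀ i, 0 ≤ a i - 2 * a (i + 1) + a (i + 2))
include ha hL hL0 hconv

theorem tendsto_runWordCount_approxRuns_div (k : ℕ) :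
    Tendsto (fun t => (runWordCount k (approxRuns a L t) : ℝ) / ((t : ℝ) + 1) ^ 3) atTop
      (𝓝 (a k)) := by
  set S : ℕ → ℝ := fun t =>
    ∑ j ∈ Finset.range (t + 1), (a j - 2 * a (j + 1) + a (j + 2)) * ((j + 1 - k : ℕ) : ℝ) + L
  have hS : Tendsto S atTop (𝓝 (a k)) := by
    simpa using
      ((tendsto_sum_secondDiff_mul ha hL hconv k).comp (tendsto_add_atTop_nat 1)).add_const L
  have herr : Tendsto (fun t => (runWordCount k (approxRuns a L t) : ℝ) / ((t : ℝ) + 1) ^ 3 - S t)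
      atTop (𝓝 0) := by
    refine squeeze_zero_norm (fun t => ?_)
      (by rw [← mul_zero ((k : ℝ) + 2)]; exact tendsto_one_div_add_atTop_nhds_zero_nat.const_mul _)
    have hD : (0 : ℝ) < ((t : ℝ) + 1) ^ 3 := by positivity
    calc ‖(runWordCount k (approxRuns a L t) : ℝ) / ((t : ℝ) + 1) ^ 3 - S t‖
        = |(runWordCount k (approxRuns a L t) : ℝ) - ((t : ℝ) + 1) ^ 3 * S t| /
            ((t : ℝ) + 1) ^ 3 := by
          rw [Real.norm_eq_abs, ← abs_of_pos hD, ← abs_div, abs_of_pos hD, sub_div,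
            mul_div_cancel_left₀ _ hD.ne']
      _ ≤ (((t : ℝ) + 1) ^ 2 + (k + 1)) / ((t : ℝ) + 1) ^ 3 := by
          gcongr
          exact abs_runWordCount_approxRuns_sub_le hconv hL0 k t
      _ ≤ ((k : ℝ) + 2) * (1 / ((t : ℝ) + 1)) := by
          rw [div_le_iff₀ hD]
          field_simp
          nlinarith [mul_nonneg (by positivity : (0 : ℝ) ≤ k + 1)
            (by positivity : (0 : ℝ) ≤ t ^ 2 + 2 * t)]
  simpa using herr.add hS

theorem tendsto_runWordCount_approxRuns_div_length (ha0 : a 0 = 1) (k : ℕ) :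
    Tendsto (fun t => (runWordCount k (approxRuns a L t) : ℝ) / runWordCount 0 (approxRuns a L t))
      atTop (𝓝 (a k)) := by
  have := (tendsto_runWordCount_approxRuns_div ha hL hL0 hconv k).div
    (tendsto_runWordCount_approxRuns_div ha hL hL0 hconv 0) (by simp [ha0])
  rw [ha0, div_one] at this
  exact this.congr fun t => div_div_div_cancel_right₀ (by positivity) _ _

end ApproxRuns

/-- **Theorem 1.4 (first part).** The set `R(a; {[0^n]}_{n≥1})` of points of `{0,1}^ℕ`
whose frequency of visits to the cylinder `[0^k]` equals `a_k` for every `k ≥ 1` is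
nonempty if and only if `1 = a_0 ≥ a_1 ≥ a_2 ≥ ⋯` and `a_i - 2a_{i+1} + a_{i+2} ≥ 0`
for all `i ≥ 0`. -/
theorem frequency_set_nonempty_iff (a : ℕ → ℝ) (ha0 : a 0 = 1) (hpos : ∀ n, 0 ≤ a n) :
    (∃ x : ℕ → Bool, ∀ k : ℕ, 1 ≤ k → hasFreq (List.replicate k false) x (a k)) ↔
      ((∀ i : ℕ, a (i + 1) ≤ a i) ∧ ∀ i : ℕ, 0 ≤ a i - 2 * a (i + 1) + a (i + 2)) := by
  simp only [hasFreq_replicate_false_iff]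
  constructor
  · rintro ⟨x, hx⟩
    have hx' (k : ℕ) : Tendsto (fun n => (zeroRunCount x k n : ℝ) / n) atTop (𝓝 (a k)) := by
      rcases k with _ | k
      · exact ha0 ▸ tendsto_zeroRunCount_zero x
      · exact hx (k + 1) k.succ_pos
    exact ⟨succ_le_of_tendsto_zeroRunCount hx',
      fun i => by linarith [two_mul_succ_le_of_tendsto_zeroRunCount hx' i]⟩
  · rintro ⟨hmono, hconv⟩
    have ha : Antitone a := antitone_nat_of_succ_le hmono
    have hlim : Tendsto a atTop (𝓝 (⨅ n, a n)) :=
      tendsto_atTop_ciInf ha ⟨0, by rintro _ ⟨n, rfl⟩; exact hpos n⟩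
    obtain ⟨x, hx⟩ := exists_tendsto_zeroRunCount approxRuns_ne_nil
      (tendsto_runWordCount_approxRuns_div_length ha hlim (le_ciInf hpos) hconv ha0)
    exact ⟨x, fun k _ => hx k⟩
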